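/- (Dishonest initial primary: identical root gathering lists.) Assume n >= 2f+1, the set D of dishonest players has exactly f elements, and the initial primary S is dishonest. Then for every adversary assignment (w, u) satisfying (A1)-(A4) and any two honest players i, i' distinct from S, the depth-1 gathering lists of i and i' agree entrywise: for every player j ∉ {S, i, i'} one has g([S, j], i) = g([S, j], i'), and moreover g([S, i], i') = w([S], i) and g([S, i'], i) = w([S], i'). Consequently all honest players output the same value g([S], i) = g([S], i'). -/

import Mathlib

namespace QBA

/-- The majority function: returns the element of `M` occurring most often in `L`,
with ties broken by taking the least such element in the linear order,
and returning the default `d` on the empty list. -/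
def maj {M : Type*} [LinearOrder M] (d : M) (L : List M) : M :=
  let s := L.toFinset.filter fun m => ∀ m' ∈ L.toFinset, L.count m' ≤ L.count m
  if h : s.Nonempty then s.min' h else d

/-- A route: a list of pairwise distinct players with head `S`
and length (depth) between `1` and `f`.  Its primary is its last entry,
and its backups are the players not occurring in it. -/
def IsRoute (n f : ℕ) (S : Fin n) (ζ : List (Fin n)) : Prop :=
  ζ.Nodup ∧ ζ.head? = some S ∧ 1 ≤ ζ.length ∧ ζ.length ≤ f

/-- The primary (last entry) of `ζ` is honest (not in `D`). -/
def HonestPrimary {n : ℕ} (D : Finset (Fin n)) (ζ : List (Fin n)) : Prop :=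
  ∀ q ∈ ζ.getLast?, q ∉ D

/-- An adversary assignment `(w, u)`: `w ζ i` is the message backup `i` accepts from
`ζ`'s primary, `u ζ j i` the message forwarder `j` forwards to verifier `i`,
subject to conditions (A1)–(A4). -/
structure Adversary (n f : ℕ) (S : Fin n) (D : Finset (Fin n)) (M : Type*) where
  w : List (Fin n) → Fin n → M
  u : List (Fin n) → Fin n → Fin n → M
  A1 : ∀ ζ : List (Fin n), IsRoute n f S ζ → HonestPrimary D ζ →
    ∀ i i' : Fin n, i ∉ ζ → i' ∉ ζ → w ζ i = w ζ i'
  A2 : ∀ (ζ : List (Fin n)) (p : Fin n), IsRoute n f S ζ → p ∉ ζ → p ∉ D →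
    IsRoute n f S (ζ ++ [p]) → ∀ i : Fin n, i ∉ ζ ++ [p] → w (ζ ++ [p]) i = w ζ p
  A3 : ∀ (ζ : List (Fin n)) (p : Fin n), IsRoute n f S ζ → HonestPrimary D ζ →
    p ∉ ζ → p ∈ D → IsRoute n f S (ζ ++ [p]) →
    ∀ i : Fin n, i ∉ ζ ++ [p] → i ∉ D → w (ζ ++ [p]) i = w ζ p
  A4 : ∀ (ζ : List (Fin n)) (j i : Fin n), IsRoute n f S ζ → j ∉ ζ → i ∉ ζ → i ≠ j →
    (j ∉ D ∨ HonestPrimary D ζ) → u ζ j i = w ζ j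

/-- Fuel-indexed gathering value; for a route `ζ` the fuel is `f - ζ.length`, so fuel `0`
corresponds to the bottom layer `ζ.length = f`. -/
def gAux {n f : ℕ} {S : Fin n} {D : Finset (Fin n)} {M : Type*} [LinearOrder M] [Inhabited M]
    (A : Adversary n f S D M) : ℕ → List (Fin n) → Fin n → M
  | 0, ζ, i =>
      maj default (A.w ζ i ::
        (((List.finRange n).filter fun j => decide (j ∉ ζ ∧ j ≠ i)).map fun j => A.u ζ j i))
  | k + 1, ζ, i =>
      maj default (((List.finRange n).filter fun j => decide (j ∉ ζ)).map
        fun j => if j = i then A.w ζ i else gAux A k (ζ ++ [j]) i)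

/-- The gathering value `g(ζ, i)` of an honest backup `i` of the route `ζ`,
defined by downward recursion on depth: at the bottom layer `ζ.length = f` it is the
majority of `w(ζ, i)` together with `u(ζ, j, i)` over all backups `j ≠ i` of `ζ`;
above the bottom layer it is the majority, over all backups `j` of `ζ`, of
`g(ζ ++ [j], i)` (where the `j = i` entry is `w(ζ, i)`). -/
def g {n f : ℕ} {S : Fin n} {D : Finset (Fin n)} {M : Type*} [LinearOrder M] [Inhabited M]
    (A : Adversary n f S D M) (ζ : List (Fin n)) (i : Fin n) : M :=
  gAux A (f - ζ.length) ζ i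

/-!
If every honest backup of a route `ζ` accepted the same value `v`, then every honest backup
gathers `v`, as soon as the honest backups are a strict majority of the backups, or the primary
of `ζ` is honest and they are at least half of them: in the second case the dishonest backups
relay `v` as well, by (A1), (A3) and (A4). Appending an honest player turns the first situation
into the second, appending a dishonest one the second into the first.

On a route made of dishonest players only, the honest backups are all of `Dᶜ`, a strict
majority since `n ≥ 2f + 1`. Hence two honest verifiers agree on the entry of every honest
backup `j` (both gather `w(ζ, j)`), and on the entry of a dishonest one by induction on the
depth; at the bottom such a route exhausts `D`, so there are no dishonest backups left.
-/

open Finset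

section Majority

variable {M : Type*} [LinearOrder M]

theorem maj_eq_of_length_lt_two_mul_count (d : M) {L : List M} {v : M}
    (h : L.length < 2 * L.count v) : maj d L = v := by
  have hlt : ∀ m, m ≠ v → L.count m < L.count v := by
    intro m hm
    have hm_le : L.count m ≤ L.countP fun a => !(a == v) := by
      rw [List.count_eq_countP]
      refine List.countP_mono_left fun a _ ha => ?_
      simp_all
    have hsplit := L.length_eq_countP_add_countP (· == v)
    simp only [decide_not, Bool.decide_eq_true, ← List.count_eq_countP] at hsplit
    omega
  have hv : v ∈ L.toFinset := List.mem_toFinset.2 (List.count_pos_iff.1 (by omega))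
  have hmax :
      (L.toFinset.filter fun m => ∀ m' ∈ L.toFinset, L.count m' ≤ L.count m) = {v} := by
    ext m
    simp only [mem_filter, mem_singleton]
    refine ⟨fun ⟨_, hm⟩ => ?_, ?_⟩
    · by_contra hmv
      exact absurd (hm v hv) (not_le.2 (hlt m hmv))
    · rintro rfl
      refine ⟨hv, fun m' _ => ?_⟩
      rcases eq_or_ne m' m with rfl | hm'
      exacts [le_rfl, (hlt m' hm').le]
  simp only [maj, hmax, singleton_nonempty, dite_true, min'_singleton]

theorem maj_perm (d : M) {L₁ L₂ : List M} (h : L₁.Perm L₂) : maj d L₁ = maj d L₂ := by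
  simp only [maj, h.count_eq, List.toFinset_eq_of_perm _ _ h]

theorem maj_map_eq_of_length_lt_two_mul_card {α : Type*} [DecidableEq α] (d : M) {l : List α}
    {F : α → M} {v : M} {s : Finset α} (hs : s ⊆ l.toFinset) (hF : ∀ j ∈ s, F j = v)
    (h : l.length < 2 * #s) : maj d (l.map F) = v := by
  apply maj_eq_of_length_lt_two_mul_count
  have hcount : #s ≤ (l.map F).count v :=
    calc #s ≤ #(l.filter fun a => F a == v).toFinset :=
          card_le_card fun j hj => by simpa [hF j hj] using hs hj
      _ ≤ (l.filter fun a => F a == v).length := List.toFinset_card_le _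
      _ = (l.map F).count v := by
          rw [List.count_eq_countP, List.countP_map, List.countP_eq_length_filter]; rfl
  rw [List.length_map]
  omega

end Majority

section Backups

variable {n : ℕ}

def backupList (ζ : List (Fin n)) : List (Fin n) :=
  (List.finRange n).filter fun j => j ∉ ζ

def backups (ζ : List (Fin n)) : Finset (Fin n) := ζ.toFinsetᶜ

def honestBackups (D : Finset (Fin n)) (ζ : List (Fin n)) : Finset (Fin n) :=
  (ζ.toFinset ∪ D)ᶜ

variable {D : Finset (Fin n)} {ζ : List (Fin n)} {j : Fin n}

@[simp]
theorem mem_backups : j ∈ backups ζ ↔ j ∉ ζ := by simp [backups]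

@[simp]
theorem mem_honestBackups : j ∈ honestBackups D ζ ↔ j ∉ ζ ∧ j ∉ D := by
  simp [honestBackups]

theorem toFinset_backupList : (backupList ζ).toFinset = backups ζ := by
  ext; simp [backupList]

theorem nodup_backupList (ζ : List (Fin n)) : (backupList ζ).Nodup :=
  (List.nodup_finRange n).filter _

theorem length_backupList (ζ : List (Fin n)) : (backupList ζ).length = #(backups ζ) := by
  rw [← toFinset_backupList, List.toFinset_card_of_nodup (nodup_backupList ζ)]

theorem honestBackups_subset_backups : honestBackups D ζ ⊆ backups ζ :=
  fun _ hj => mem_backups.2 (mem_honestBackups.1 hj).1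

theorem backups_concat : backups (ζ ++ [j]) = (backups ζ).erase j := by
  ext; simp [and_comm]

theorem honestBackups_concat : honestBackups D (ζ ++ [j]) = (honestBackups D ζ).erase j := by
  ext; simp; tauto

theorem honestBackups_eq_compl (hζD : ∀ x ∈ ζ, x ∈ D) : honestBackups D ζ = Dᶜ := by
  rw [honestBackups, union_eq_right.2 fun x hx => hζD x (List.mem_toFinset.1 hx)]

theorem card_backups_concat_le_of_honest (hj : j ∉ ζ) (hjD : j ∉ D)
    (h : #(backups ζ) < 2 * #(honestBackups D ζ)) :
    #(backups (ζ ++ [j])) ≤ 2 * #(honestBackups D (ζ ++ [j])) := by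
  rw [backups_concat, honestBackups_concat, card_erase_of_mem (mem_backups.2 hj),
    card_erase_of_mem (mem_honestBackups.2 ⟨hj, hjD⟩)]
  omega

theorem card_backups_concat_lt_of_dishonest (hj : j ∉ ζ) (hjD : j ∈ D)
    (h : #(backups ζ) ≤ 2 * #(honestBackups D ζ)) :
    #(backups (ζ ++ [j])) < 2 * #(honestBackups D (ζ ++ [j])) := by
  rw [backups_concat, honestBackups_concat, card_erase_of_mem (mem_backups.2 hj),
    erase_eq_of_notMem (by simp [hjD])]
  have := card_pos.2 ⟨j, mem_backups.2 hj⟩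
  omega

theorem card_backups_lt_two_mul_card_honestBackups {f : ℕ} (hnf : 2 * f + 1 ≤ n) (hD : #D = f)
    (hζD : ∀ x ∈ ζ, x ∈ D) : #(backups ζ) < 2 * #(honestBackups D ζ) := by
  rw [honestBackups_eq_compl hζD, card_compl, Fintype.card_fin]
  have := card_le_univ (backups ζ)
  simp only [Fintype.card_fin] at this
  omega

theorem mem_of_forall_mem_of_card_le_length (hζ : ζ.Nodup) (hζD : ∀ x ∈ ζ, x ∈ D)
    (hlen : #D ≤ ζ.length) (hj : j ∈ D) : j ∈ ζ := by
  have hζD' : ζ.toFinset = D := eq_of_subset_of_card_le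
    (fun x hx => hζD x (List.mem_toFinset.1 hx)) (by rwa [List.toFinset_card_of_nodup hζ])
  exact List.mem_toFinset.1 (hζD' ▸ hj)

end Backups

section Routes

variable {n f : ℕ} {S : Fin n} {D : Finset (Fin n)} {ζ : List (Fin n)} {j : Fin n}

theorem IsRoute.concat (hζ : IsRoute n f S ζ) (hlt : ζ.length < f) (hj : j ∉ ζ) :
    IsRoute n f S (ζ ++ [j]) := by
  obtain ⟨hnd, hhead, hpos, -⟩ := hζ
  refine ⟨List.nodup_append.2 ⟨hnd, List.nodup_singleton j, ?_⟩, ?_, by simp,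
    by simp; omega⟩
  · rintro a ha b hb rfl
    exact hj (List.mem_singleton.1 hb ▸ ha)
  · rwa [List.head?_append_of_ne_nil _ (List.ne_nil_of_length_pos hpos)]

theorem honestPrimary_concat (hj : j ∉ D) : HonestPrimary D (ζ ++ [j]) := by
  simpa [HonestPrimary] using hj

end Routes

section Gathering

variable {n f : ℕ} {S : Fin n} {D : Finset (Fin n)} {M : Type*} [LinearOrder M] [Inhabited M]
  (A : Adversary n f S D M)

/-- Entry `j ≠ i` of the list whose majority is `gAux A k ζ i`: the value `u(ζ, j, i)` forwarded
by `j` at the bottom layer, the gathering value `g(ζ ++ [j], i)` above it. -/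
def gatherEntry : ℕ → List (Fin n) → Fin n → Fin n → M
  | 0, ζ, i, j => A.u ζ j i
  | k + 1, ζ, i, j => gAux A k (ζ ++ [j]) i

theorem gAux_eq_maj (k : ℕ) {ζ : List (Fin n)} {i : Fin n} (hi : i ∉ ζ) :
    gAux A k ζ i = maj default ((backupList ζ).map fun j =>
      if j = i then A.w ζ i else gatherEntry A k ζ i j) := by
  cases k with
  | zero =>
    apply maj_perm
    have hi' : i ∈ backupList ζ := by simp [backupList, hi]
    refine (((List.perm_cons_erase hi').map _).trans ?_).symm
    rw [(nodup_backupList ζ).erase_eq_filter, List.map_cons, if_pos rfl]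
    refine .of_eq (congrArg _ ?_)
    rw [backupList, List.filter_filter]
    refine List.map_congr_left ?_ |>.trans (congrArg _ (List.filter_congr ?_))
    · intro j hj
      have hji : j ≠ i ∧ j ∉ ζ := by simpa using (List.mem_filter.1 hj).2
      rw [if_neg hji.1, gatherEntry]
    · intro j _
      by_cases hji : j = i <;> simp [hji]
  | succ k => rfl

theorem gAux_eq_of_two_mul_card_gt {k : ℕ} {ζ : List (Fin n)} {i : Fin n} {v : M} (hi : i ∉ ζ)
    (hwi : A.w ζ i = v) {s : Finset (Fin n)} (hs : s ⊆ backups ζ)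
    (hsv : ∀ j ∈ s, j ≠ i → gatherEntry A k ζ i j = v) (h : #(backups ζ) < 2 * #s) :
    gAux A k ζ i = v := by
  rw [gAux_eq_maj A k hi]
  refine maj_map_eq_of_length_lt_two_mul_card default (toFinset_backupList ▸ hs) (fun j hj => ?_)
    (length_backupList ζ ▸ h)
  split_ifs with hji
  exacts [hwi, hsv j hj hji]

theorem gAux_eq_of_entries {k : ℕ} {ζ : List (Fin n)} {i : Fin n} {v : M} (hi : i ∉ ζ)
    (hiD : i ∉ D) (hwi : A.w ζ i = v)
    (honest : #(backups ζ) < 2 * #(honestBackups D ζ) →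
      ∀ j, j ∉ ζ → j ∉ D → j ≠ i → gatherEntry A k ζ i j = v)
    (dishonest : HonestPrimary D ζ → #(backups ζ) ≤ 2 * #(honestBackups D ζ) →
      ∀ j, j ∉ ζ → j ∈ D → gatherEntry A k ζ i j = v)
    (hmaj : #(backups ζ) < 2 * #(honestBackups D ζ) ∨
      HonestPrimary D ζ ∧ #(backups ζ) ≤ 2 * #(honestBackups D ζ)) :
    gAux A k ζ i = v := by
  by_cases hQ : #(backups ζ) < 2 * #(honestBackups D ζ)
  · refine gAux_eq_of_two_mul_card_gt A hi hwi honestBackups_subset_backups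
      (fun j hj hji => ?_) hQ
    obtain ⟨hj, hjD⟩ := mem_honestBackups.1 hj
    exact honest hQ j hj hjD hji
  · obtain ⟨hP, hle⟩ := hmaj.resolve_left hQ
    refine gAux_eq_of_two_mul_card_gt A hi hwi (s := insert i (backups ζ \ honestBackups D ζ))
      (insert_subset (mem_backups.2 hi) sdiff_subset) (fun j hj hji => ?_) ?_
    · have hj' := (mem_insert.1 hj).resolve_left hji
      simp only [mem_sdiff, mem_backups, mem_honestBackups, not_and, not_not] at hj'
      exact dishonest hP hle j hj'.1 (hj'.2 hj'.1)
    · rw [card_insert_of_notMem (by simp [hiD]), card_sdiff_of_subset honestBackups_subset_backups]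
      omega

theorem gAux_eq_of_honest_accept (k : ℕ) {ζ : List (Fin n)} (hζ : IsRoute n f S ζ)
    (hk : ζ.length + k = f) {v : M} (hv : ∀ m, m ∉ ζ → m ∉ D → A.w ζ m = v)
    {i : Fin n} (hi : i ∉ ζ) (hiD : i ∉ D)
    (hmaj : #(backups ζ) < 2 * #(honestBackups D ζ) ∨
      HonestPrimary D ζ ∧ #(backups ζ) ≤ 2 * #(honestBackups D ζ)) :
    gAux A k ζ i = v := by
  induction k generalizing ζ v i with
  | zero =>
    refine gAux_eq_of_entries A hi hiD (hv i hi hiD) (fun _ j hj hjD hji => ?_)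
      (fun hP _ j hj hjD => ?_) hmaj
    · rw [gatherEntry, A.A4 ζ j i hζ hj hi (Ne.symm hji) (.inl hjD), hv j hj hjD]
    · rw [gatherEntry, A.A4 ζ j i hζ hj hi (by rintro rfl; exact hiD hjD) (.inr hP),
        A.A1 ζ hζ hP j i hj hi, hv i hi hiD]
  | succ k ih =>
    refine gAux_eq_of_entries A hi hiD (hv i hi hiD) (fun hQ j hj hjD hji => ?_)
      (fun hP hle j hj hjD => ?_) hmaj
    · have hζj := hζ.concat (by omega) hj
      refine ih hζj (by simp; omega) (fun m hm _ => ?_) (by simp [hi, Ne.symm hji]) hiD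
        (.inr ⟨honestPrimary_concat hjD, card_backups_concat_le_of_honest hj hjD hQ⟩)
      rw [A.A2 ζ j hζ hj hjD hζj m hm, hv j hj hjD]
    · have hζj := hζ.concat (by omega) hj
      have hji : j ≠ i := by rintro rfl; exact hiD hjD
      refine ih hζj (by simp; omega) (fun m hm hmD => ?_) (by simp [hi, Ne.symm hji]) hiD
        (.inl (card_backups_concat_lt_of_dishonest hj hjD hle))
      rw [A.A3 ζ j hζ hP hj hjD hζj m hm hmD, A.A1 ζ hζ hP j i hj hi, hv i hi hiD]

theorem gatherEntry_eq_of_honest {k : ℕ} {ζ : List (Fin n)} (hζ : IsRoute n f S ζ)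
    (hk : ζ.length + k = f) {j : Fin n} (hj : j ∉ ζ) (hjD : j ∉ D) {m : Fin n} (hm : m ∉ ζ)
    (hmD : m ∉ D) (hmj : m ≠ j) (hQ : #(backups ζ) < 2 * #(honestBackups D ζ)) :
    gatherEntry A k ζ m j = A.w ζ j := by
  cases k with
  | zero => exact A.A4 ζ j m hζ hj hm hmj (.inl hjD)
  | succ k =>
    have hζj := hζ.concat (by omega) hj
    exact gAux_eq_of_honest_accept A k hζj (by simp; omega)
      (fun x hx _ => A.A2 ζ j hζ hj hjD hζj x hx) (by simp [hm, hmj]) hmD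
      (.inr ⟨honestPrimary_concat hjD, card_backups_concat_le_of_honest hj hjD hQ⟩)

theorem gAux_eq_gAux_of_dishonest_entries {k : ℕ} {ζ : List (Fin n)} (hζ : IsRoute n f S ζ)
    (hk : ζ.length + k = f) (hQ : #(backups ζ) < 2 * #(honestBackups D ζ)) {i i' : Fin n}
    (hi : i ∉ ζ) (hiD : i ∉ D) (hi' : i' ∉ ζ) (hi'D : i' ∉ D)
    (hdis : ∀ j, j ∉ ζ → j ∈ D → gatherEntry A k ζ i j = gatherEntry A k ζ i' j) :
    gAux A k ζ i = gAux A k ζ i' := by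
  rw [gAux_eq_maj A k hi, gAux_eq_maj A k hi']
  refine congrArg _ (List.map_congr_left fun j hj => ?_)
  have hj : j ∉ ζ := by simpa [backupList] using hj
  by_cases hjD : j ∈ D
  · rw [if_neg (by rintro rfl; exact hiD hjD), if_neg (by rintro rfl; exact hi'D hjD)]
    exact hdis j hj hjD
  · have entry : ∀ m, m ∉ ζ → m ∉ D →
        (if j = m then A.w ζ m else gatherEntry A k ζ m j) = A.w ζ j := by
      intro m hm hmD
      split_ifs with hjm
      · rw [hjm]
      · exact gatherEntry_eq_of_honest A hζ hk hj hjD hm hmD (Ne.symm hjm) hQ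
    rw [entry i hi hiD, entry i' hi' hi'D]

theorem gAux_eq_gAux_of_forall_mem_dishonest (hnf : 2 * f + 1 ≤ n) (hD : #D = f) (k : ℕ)
    {ζ : List (Fin n)} (hζ : IsRoute n f S ζ) (hk : ζ.length + k = f)
    (hζD : ∀ x ∈ ζ, x ∈ D) {i i' : Fin n} (hi : i ∉ ζ) (hiD : i ∉ D) (hi' : i' ∉ ζ)
    (hi'D : i' ∉ D) : gAux A k ζ i = gAux A k ζ i' := by
  induction k generalizing ζ with
  | zero =>
    refine gAux_eq_gAux_of_dishonest_entries A hζ hk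
      (card_backups_lt_two_mul_card_honestBackups hnf hD hζD) hi hiD hi' hi'D fun j hj hjD => ?_
    exact absurd (mem_of_forall_mem_of_card_le_length hζ.1 hζD (by omega) hjD) hj
  | succ k ih =>
    refine gAux_eq_gAux_of_dishonest_entries A hζ hk
      (card_backups_lt_two_mul_card_honestBackups hnf hD hζD) hi hiD hi' hi'D fun j hj hjD => ?_
    have hji : j ≠ i := by rintro rfl; exact hiD hjD
    have hji' : j ≠ i' := by rintro rfl; exact hi'D hjD
    exact ih (hζ.concat (by omega) hj) (by simp; omega)
      (by simpa [or_imp, forall_and] using ⟨hζD, hjD⟩) (by simp [hi, Ne.symm hji])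
      (by simp [hi', Ne.symm hji'])

theorem g_eq_g_of_forall_mem_dishonest (hnf : 2 * f + 1 ≤ n) (hD : #D = f) {ζ : List (Fin n)}
    (hζ : IsRoute n f S ζ) (hζD : ∀ x ∈ ζ, x ∈ D) {i i' : Fin n} (hi : i ∉ ζ)
    (hiD : i ∉ D) (hi' : i' ∉ ζ) (hi'D : i' ∉ D) : g A ζ i = g A ζ i' :=
  gAux_eq_gAux_of_forall_mem_dishonest A hnf hD _ hζ (by have := hζ.2.2.2; omega) hζD
    hi hiD hi' hi'D

theorem g_concat_eq_of_honest {ζ : List (Fin n)} (hζ : IsRoute n f S ζ) (hlt : ζ.length < f)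
    (hQ : #(backups ζ) < 2 * #(honestBackups D ζ)) {j : Fin n} (hj : j ∉ ζ) (hjD : j ∉ D)
    {m : Fin n} (hm : m ∉ ζ) (hmD : m ∉ D) (hmj : m ≠ j) :
    g A (ζ ++ [j]) m = A.w ζ j := by
  obtain ⟨k, hk⟩ : ∃ k, f - ζ.length = k + 1 := ⟨f - ζ.length - 1, by omega⟩
  have hg : g A (ζ ++ [j]) m = gatherEntry A (k + 1) ζ m j := by
    rw [gatherEntry, g, List.length_append, List.length_singleton]
    congr 1
    omega
  rw [hg, gatherEntry_eq_of_honest A hζ (by omega) hj hjD hm hmD hmj hQ]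

end Gathering

theorem dishonest_primary_identical_root_lists_general
    {n f : ℕ} {S : Fin n} {D : Finset (Fin n)} {M : Type*} [LinearOrder M] [Inhabited M]
    (hf : 2 ≤ f) (hnf : 2 * f + 1 ≤ n) (hD : D.card = f) (hS : S ∈ D)
    (A : Adversary n f S D M) (i i' : Fin n)
    (hiH : i ∉ D) (hi'H : i' ∉ D) (hiS : i ≠ S) (hi'S : i' ≠ S) (hii' : i ≠ i') :
    (∀ j : Fin n, j ≠ S → j ≠ i → j ≠ i' → g A [S, j] i = g A [S, j] i') ∧
    g A [S, i] i' = A.w [S] i ∧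
    g A [S, i'] i = A.w [S] i' ∧
    g A [S] i = g A [S] i' := by
  have hroot : IsRoute n f S [S] := ⟨List.nodup_singleton S, rfl, le_rfl, by simp; omega⟩
  have hrootD : ∀ x ∈ [S], x ∈ D := by simpa using hS
  have honest_child : ∀ j, j ≠ S → j ∉ D → ∀ m, m ≠ S → m ∉ D → m ≠ j →
      g A [S, j] m = A.w [S] j := fun j hjS hjD m hmS hmD hmj =>
    g_concat_eq_of_honest A hroot (by simp; omega)
      (card_backups_lt_two_mul_card_honestBackups hnf hD hrootD) (by simpa using hjS) hjD
      (by simpa using hmS) hmD hmj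
  refine ⟨fun j hjS hji hji' => ?_, honest_child i hiS hiH i' hi'S hi'H (Ne.symm hii'),
    honest_child i' hi'S hi'H i hiS hiH hii',
    g_eq_g_of_forall_mem_dishonest A hnf hD hroot hrootD (by simpa using hiS) hiH
      (by simpa using hi'S) hi'H⟩
  by_cases hjD : j ∈ D
  · exact g_eq_g_of_forall_mem_dishonest A hnf hD
      (hroot.concat (by simp; omega) (by simpa using hjS)) (by simpa using ⟨hS, hjD⟩)
      (by simp [hiS, Ne.symm hji]) hiH (by simp [hi'S, Ne.symm hji']) hi'H
  · rw [honest_child j hjS hjD i hiS hiH (Ne.symm hji),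
      honest_child j hjS hjD i' hi'S hi'H (Ne.symm hji')]

/-- **Dishonest initial primary: identical root gathering lists.**
Assume `n ≥ 2f + 1`, the set `D` of dishonest players has exactly `f` elements, and
the initial primary `S` is dishonest.  Then for every adversary assignment `(w, u)`
satisfying (A1)–(A4) and any two honest players `i, i'` distinct from `S`, the
depth-1 gathering lists of `i` and `i'` agree entrywise: for every player
`j ∉ {S, i, i'}` one has `g([S, j], i) = g([S, j], i')`, and moreover
`g([S, i], i') = w([S], i)` and `g([S, i'], i) = w([S], i')`.  Consequently all
honest players output the same value `g([S], i) = g([S], i')`.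
(The depth-2 gathering values appearing here presuppose that depth-2 routes exist,
i.e. `2 ≤ f`.) -/
theorem dishonest_primary_identical_root_lists
    {n f : ℕ} {S : Fin n} {D : Finset (Fin n)} {M : Type*} [LinearOrder M] [Inhabited M]
    (hn : 2 ≤ n) (hf : 2 ≤ f) (hnf : 2 * f + 1 ≤ n) (hD : D.card = f) (hS : S ∈ D)
    (A : Adversary n f S D M) (i i' : Fin n)
    (hiH : i ∉ D) (hi'H : i' ∉ D) (hiS : i ≠ S) (hi'S : i' ≠ S) (hii' : i ≠ i') :
    (∀ j : Fin n, j ≠ S → j ≠ i → j ≠ i' → g A [S, j] i = g A [S, j] i') ∧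
    g A [S, i] i' = A.w [S] i ∧
    g A [S, i'] i = A.w [S] i' ∧
    g A [S] i = g A [S] i' :=
  dishonest_primary_identical_root_lists_general hf hnf hD hS A i i' hiH hi'H hiS hi'S hii'

end QBA
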